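/- Define N₄(η) := cosh(η)/sinh²(η) + log(tanh(η/2)) for η > 0. Then N₄(η) > 0 for all η > 0 and lim_{η→∞} (1/η) · log N₄(η) = −3. -/

import Mathlib

/-!
Since `-log (tanh (η / 2)) = arsinh (1 / sinh η)` and `cosh η = sinh η + exp (-η)`, writing
`x = 1 / sinh η` gives `N₄ η = exp (-η) * x ^ 2 + (x - arsinh x)`. Both summands are nonnegative,
and `0 ≤ x - arsinh x ≤ x ^ 3` for `x ≤ 1`; as `x ≍ exp (-η)`, this pins `N₄ η` between two
constant multiples of `exp (-3 η)`, which determines the exponential rate.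
-/

open Real Filter

/-- Numerator of the hitting probability of the 4-dimensional hyperbolic Brownian motion:
`N₄(η) = cosh η / sinh² η + log(tanh(η/2))`. -/
noncomputable def N₄ (η : ℝ) : ℝ :=
  Real.cosh η / Real.sinh η ^ 2 + Real.log (Real.tanh (η / 2))

namespace Real

lemma sinh_sub_self_le_pow_three {u : ℝ} (h0 : 0 ≤ u) (h1 : u ≤ 1) : sinh u - u ≤ u ^ 3 := by
  have hpos := exp_bound (x := u) (by rwa [abs_of_nonneg h0]) (n := 3) (by norm_num)
  have hneg := exp_bound (x := -u) (by rwa [abs_neg, abs_of_nonneg h0]) (n := 3) (by norm_num)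
  rw [abs_neg, abs_of_nonneg h0] at hneg
  rw [abs_of_nonneg h0] at hpos
  simp only [Finset.sum_range_succ, Finset.sum_range_zero, Nat.factorial] at hpos hneg
  rw [abs_le] at hpos hneg
  rw [sinh_eq]
  norm_num at hpos hneg
  nlinarith [pow_nonneg h0 3]

lemma arsinh_le_self {x : ℝ} (hx : 0 ≤ x) : arsinh x ≤ x := by
  simpa using self_le_sinh_iff.2 (arsinh_nonneg_iff.2 hx)

lemma sub_arsinh_le_pow_three {x : ℝ} (h0 : 0 ≤ x) (h1 : x ≤ 1) : x - arsinh x ≤ x ^ 3 := by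
  have hu0 : 0 ≤ arsinh x := arsinh_nonneg_iff.2 h0
  have hux : arsinh x ≤ x := arsinh_le_self h0
  calc x - arsinh x = sinh (arsinh x) - arsinh x := by rw [sinh_arsinh]
    _ ≤ arsinh x ^ 3 := sinh_sub_self_le_pow_three hu0 (hux.trans h1)
    _ ≤ x ^ 3 := by gcongr

lemma sinh_le_exp_div_two (x : ℝ) : sinh x ≤ exp x / 2 := by
  rw [sinh_eq]; linarith [exp_pos (-x)]

lemma exp_div_four_le_sinh {x : ℝ} (hx : 1 ≤ x) : exp x / 4 ≤ sinh x := by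
  have h2 : 2 ≤ exp x := by linarith [add_one_le_exp x]
  have hprod : exp (-x) * exp x = 1 := by rw [← exp_add, neg_add_cancel, exp_zero]
  rw [sinh_eq]
  nlinarith [exp_pos (-x)]

lemma log_tanh_half {η : ℝ} (hη : 0 < η) : log (tanh (η / 2)) = -arsinh (sinh η)⁻¹ := by
  have hs : 0 < sinh (η / 2) := sinh_pos_iff.2 (by linarith)
  have hc : 0 < cosh (η / 2) := cosh_pos _
  have ht : 0 < tanh (η / 2) := by rw [tanh_eq_sinh_div_cosh]; positivity
  have hsinh : sinh (-log (tanh (η / 2))) = (sinh η)⁻¹ := by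
    rw [sinh_neg, sinh_log ht, tanh_eq_sinh_div_cosh,
      show η = 2 * (η / 2) by ring, sinh_two_mul]
    field_simp
    linear_combination cosh_sq (η / 2)
  rw [← hsinh, arsinh_sinh, neg_neg]

end Real

lemma N₄_eq {η : ℝ} (hη : 0 < η) :
    N₄ η = exp (-η) * (sinh η)⁻¹ ^ 2 + ((sinh η)⁻¹ - arsinh (sinh η)⁻¹) := by
  have hs : sinh η ≠ 0 := (sinh_pos_iff.2 hη).ne'
  rw [N₄, log_tanh_half hη, ← cosh_sub_sinh]
  field_simp
  ring

lemma N₄_lower {η : ℝ} (hη : 0 < η) : 4 * exp (-3 * η) ≤ N₄ η := by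
  have hs : 0 < sinh η := sinh_pos_iff.2 hη
  have hx : 0 ≤ (sinh η)⁻¹ := inv_nonneg.2 hs.le
  have hinv : 2 * exp (-η) ≤ (sinh η)⁻¹ := by
    rw [le_inv_comm₀ (by positivity) hs, mul_inv, ← exp_neg, neg_neg]
    linarith [sinh_le_exp_div_two η]
  have he : exp (-3 * η) = exp (-η) ^ 3 := by rw [← exp_nat_mul]; ring_nf
  calc 4 * exp (-3 * η) = exp (-η) * (2 * exp (-η)) ^ 2 := by rw [he]; ring
    _ ≤ exp (-η) * (sinh η)⁻¹ ^ 2 := by gcongr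
    _ ≤ N₄ η := by
        rw [N₄_eq hη]
        linarith [arsinh_le_self hx]

lemma N₄_upper {η : ℝ} (hη : 1 ≤ η) : N₄ η ≤ 80 * exp (-3 * η) := by
  have hs : 0 < sinh η := sinh_pos_iff.2 (by linarith)
  have hx : 0 ≤ (sinh η)⁻¹ := inv_nonneg.2 hs.le
  have hinv : (sinh η)⁻¹ ≤ 4 * exp (-η) := by
    rw [inv_le_comm₀ hs (by positivity), mul_inv, ← exp_neg, neg_neg]
    linarith [exp_div_four_le_sinh hη]
  have hx1 : (sinh η)⁻¹ ≤ 1 :=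
    inv_le_one_of_one_le₀ ((self_lt_sinh_iff.2 one_pos).le.trans (sinh_le_sinh.2 hη))
  have he : exp (-3 * η) = exp (-η) ^ 3 := by rw [← exp_nat_mul]; ring_nf
  calc N₄ η ≤ exp (-η) * (sinh η)⁻¹ ^ 2 + (sinh η)⁻¹ ^ 3 := by
        rw [N₄_eq (by linarith)]
        linarith [sub_arsinh_le_pow_three hx hx1]
    _ ≤ exp (-η) * (4 * exp (-η)) ^ 2 + (4 * exp (-η)) ^ 3 := by gcongr
    _ = 80 * exp (-3 * η) := by rw [he]; ring

lemma tendsto_inv_mul_log_of_exp_bounds {f : ℝ → ℝ} {a c C : ℝ} (hc : 0 < c)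
    (hf : ∀ᶠ η in atTop, c * exp (-a * η) ≤ f η ∧ f η ≤ C * exp (-a * η)) :
    Tendsto (fun η => (1 / η) * log (f η)) atTop (nhds (-a)) := by
  have hlim : ∀ b : ℝ, Tendsto (fun η : ℝ => log b / η - a) atTop (nhds (-a)) := fun b => by
    simpa using (tendsto_const_nhds.div_atTop tendsto_id).sub_const a
  have hsqueeze : ∀ᶠ η in atTop,
      log c / η - a ≤ (1 / η) * log (f η) ∧ (1 / η) * log (f η) ≤ log C / η - a := by
    filter_upwards [hf, eventually_gt_atTop 0] with η ⟨hlo, hhi⟩ hη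
    have hlog : ∀ b : ℝ, 0 < b → (1 / η) * log (b * exp (-a * η)) = log b / η - a :=
      fun b hb => by rw [log_mul hb.ne' (exp_pos _).ne', log_exp]; field_simp; ring
    have hfpos : 0 < f η := (by positivity : 0 < c * exp (-a * η)).trans_le hlo
    have hC : 0 < C := pos_of_mul_pos_left (hfpos.trans_le hhi) (exp_pos _).le
    rw [← hlog c hc, ← hlog C hC]
    constructor <;> gcongr
  exact tendsto_of_tendsto_of_tendsto_of_le_of_le' (hlim c) (hlim C)
    (hsqueeze.mono fun _ h => h.1) (hsqueeze.mono fun _ h => h.2)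

/-- `N₄` is positive on `(0,∞)` and `lim_{η→∞} (1/η) log N₄(η) = -3`, i.e. the hitting
probability of a hyperbolic ball for the 4-dimensional hyperbolic Brownian motion decays
with exponential rate `n - 1 = 3`. -/
theorem hitting_decay_dim4 :
    (∀ η : ℝ, 0 < η → 0 < N₄ η) ∧
    Filter.Tendsto (fun η : ℝ => (1 / η) * Real.log (N₄ η)) Filter.atTop (nhds (-3)) := by
  refine ⟨fun η hη => (by positivity : 0 < 4 * exp (-3 * η)).trans_le (N₄_lower hη), ?_⟩
  refine tendsto_inv_mul_log_of_exp_bounds (c := 4) (C := 80) four_pos ?_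
  filter_upwards [eventually_ge_atTop 1] with η hη
  exact ⟨N₄_lower (by linarith), N₄_upper hη⟩
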